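/- arXiv:0810.1174 — 2 statements merged into one kernel-verified Lean document; each statement's English description precedes it below -/
import Mathlib

section
/- Suppose $d_2 = 0$ and $d_1 < \lambda_0$ (so $d_+ = d_1 - \lambda_0 < 0$) and $\tilde G > 0$, $L + d_1 - \lambda_0 > 0$. Then the eigenvalue $\lambda = \frac{-2 G_+ d_+}{G_+ + L_+ + \sqrt{(G_+ + L_+)^2 - 4 G_+ d_+}}$ of the two-phase system is strictly positive, and $\lambda \to 0$ as $\tilde G \to 0^+$ with asymptotic $\lambda \sim \frac{\tilde G(\lambda_0 - d_1)}{L + d_1 - \lambda_0}$. -/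
/-!
The numerator `-2 G d₊` is positive and the denominator is at least `G + L₊ > 0`. As `G → 0⁺`
the denominator tends to `2 L₊`, so `λ` behaves like `-2 G d₊ / (2 L₊) = G (λ₀ - d₁) / L₊`.
-/

open Real Set Filter

/-- The eigenvalue `λ` as a function of `G = G₊`, with `L = L₊` and `d = d₊`. -/
noncomputable def twoPhaseEigenvalue (L d G : ℝ) : ℝ :=
  -2 * G * d / (G + L + √((G + L) ^ 2 - 4 * G * d))

section TwoPhaseEigenvalue

variable {L d : ℝ}

lemma twoPhaseDenom_pos {G : ℝ} (h : 0 < G + L) : 0 < G + L + √((G + L) ^ 2 - 4 * G * d) :=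
  add_pos_of_pos_of_nonneg h (sqrt_nonneg _)

lemma tendsto_twoPhaseDenom (hL : 0 ≤ L) :
    Tendsto (fun G => G + L + √((G + L) ^ 2 - 4 * G * d)) (nhds 0) (nhds (2 * L)) := by
  have hcont : Continuous fun G => G + L + √((G + L) ^ 2 - 4 * G * d) := by fun_prop
  convert hcont.tendsto 0 using 2
  simp [sqrt_sq hL, two_mul]

lemma twoPhaseEigenvalue_pos (hL : 0 < L) (hd : d < 0) {G : ℝ} (hG : 0 < G) :
    0 < twoPhaseEigenvalue L d G :=
  div_pos (by nlinarith) (twoPhaseDenom_pos (by linarith))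

lemma tendsto_twoPhaseEigenvalue_zero (hL : 0 < L) :
    Tendsto (twoPhaseEigenvalue L d) (nhds 0) (nhds 0) := by
  have hnum : Tendsto (fun G : ℝ => -2 * G * d) (nhds 0) (nhds 0) := by
    have hcont : Continuous fun G : ℝ => -2 * G * d := by fun_prop
    simpa using hcont.tendsto 0
  have := hnum.div (tendsto_twoPhaseDenom (d := d) hL.le) (by positivity)
  rwa [zero_div] at this

lemma twoPhaseEigenvalue_div_linear_eq (hL : 0 < L) (hd : d ≠ 0) {G : ℝ} (hG : 0 < G) :
    twoPhaseEigenvalue L d G / (G * -d / L) = 2 * L / (G + L + √((G + L) ^ 2 - 4 * G * d)) := by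
  have hD := (twoPhaseDenom_pos (d := d) (add_pos hG hL)).ne'
  unfold twoPhaseEigenvalue
  field_simp [hG.ne', hd, hL.ne']

lemma tendsto_twoPhaseEigenvalue_div_linear (hL : 0 < L) (hd : d ≠ 0) :
    Tendsto (fun G => twoPhaseEigenvalue L d G / (G * -d / L)) (nhdsWithin 0 (Ioi 0))
      (nhds 1) := by
  have hlim : Tendsto (fun G => 2 * L / (G + L + √((G + L) ^ 2 - 4 * G * d)))
      (nhdsWithin 0 (Ioi 0)) (nhds 1) := by
    have := (tendsto_const_nhds (x := 2 * L)).div (tendsto_twoPhaseDenom (d := d) hL.le)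
      (by positivity)
    rw [div_self (by positivity)] at this
    exact tendsto_nhdsWithin_of_tendsto_nhds this
  refine hlim.congr' ?_
  filter_upwards [self_mem_nhdsWithin] with G hG
  exact (twoPhaseEigenvalue_div_linear_eq hL hd hG).symm

end TwoPhaseEigenvalue

theorem two_phase_positive_eigenvalue_general (d1 L lam0 : ℝ)
    (hd1lam : d1 < lam0)
    (hLp : 0 < L + d1 - lam0) :
    (∀ Gt : ℝ, 0 < Gt →
      0 < -2 * Gt * (d1 - lam0)
        / (Gt + (L + d1 - lam0)
          + Real.sqrt ((Gt + (L + d1 - lam0))^2 - 4 * Gt * (d1 - lam0)))) ∧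
    Tendsto (fun Gt : ℝ => -2 * Gt * (d1 - lam0)
        / (Gt + (L + d1 - lam0)
          + Real.sqrt ((Gt + (L + d1 - lam0))^2 - 4 * Gt * (d1 - lam0))))
      (nhdsWithin 0 (Set.Ioi 0)) (nhds 0) ∧
    Tendsto (fun Gt : ℝ => (-2 * Gt * (d1 - lam0)
        / (Gt + (L + d1 - lam0)
          + Real.sqrt ((Gt + (L + d1 - lam0))^2 - 4 * Gt * (d1 - lam0))))
        / (Gt * (lam0 - d1) / (L + d1 - lam0)))
      (nhdsWithin 0 (Set.Ioi 0)) (nhds 1) := by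
  have hd : d1 - lam0 < 0 := sub_neg.mpr hd1lam
  refine ⟨fun Gt hGt => twoPhaseEigenvalue_pos hLp hd hGt,
    tendsto_nhdsWithin_of_tendsto_nhds (tendsto_twoPhaseEigenvalue_zero hLp), ?_⟩
  have := tendsto_twoPhaseEigenvalue_div_linear hLp hd.ne
  rwa [neg_sub] at this

/-- With `d₂ = 0`, `d₁ < λ₀`, `G̃ > 0` and `L + d₁ - λ₀ > 0`, the eigenvalue
`λ(G̃) = -2G̃d₊/(G̃+L₊+√((G̃+L₊)²-4G̃d₊))` is positive, tends to `0` as `G̃ → 0⁺`,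
with asymptotic `λ ∼ G̃(λ₀-d₁)/(L+d₁-λ₀)`. -/
theorem two_phase_positive_eigenvalue (d1 L lam0 : ℝ)
    (hd1 : 0 < d1) (hlam0 : 0 < lam0) (hd1lam : d1 < lam0)
    (hLp : 0 < L + d1 - lam0) :
    (∀ Gt : ℝ, 0 < Gt →
      0 < -2 * Gt * (d1 - lam0)
        / (Gt + (L + d1 - lam0)
          + Real.sqrt ((Gt + (L + d1 - lam0))^2 - 4 * Gt * (d1 - lam0)))) ∧
    Tendsto (fun Gt : ℝ => -2 * Gt * (d1 - lam0)
        / (Gt + (L + d1 - lam0)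
          + Real.sqrt ((Gt + (L + d1 - lam0))^2 - 4 * Gt * (d1 - lam0))))
      (nhdsWithin 0 (Set.Ioi 0)) (nhds 0) ∧
    Tendsto (fun Gt : ℝ => (-2 * Gt * (d1 - lam0)
        / (Gt + (L + d1 - lam0)
          + Real.sqrt ((Gt + (L + d1 - lam0))^2 - 4 * Gt * (d1 - lam0))))
        / (Gt * (lam0 - d1) / (L + d1 - lam0)))
      (nhdsWithin 0 (Set.Ioi 0)) (nhds 1) :=
  two_phase_positive_eigenvalue_general d1 L lam0 hd1lam hLp
end

section
/- Let $S : [0,\infty) \to (0,\infty)$ be a differentiable function satisfying the differential inequality $S'(t) \le C S(t) \frac{\alpha_1 \theta^n}{\theta^n + (C_3 S(t))^n}$ with positive constants $C, \alpha_1, \theta, C_3, n$. Then there exist $a > 0$ and $t_0 \ge 0$ such that $\Sigma(t) = a(t + t_0)^{1/n}$ is a supersolution (i.e. $\Sigma' \ge C\Sigma \frac{\alpha_1\theta^n}{\theta^n + (C_3\Sigma)^n}$ for all $t \ge 0$ and $\Sigma(0) \ge S(0)$), and consequently $S(t) \le a(t+t_0)^{1/n}$ for all $t \ge 0$. -/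
/-!
Choose the amplitude `a` so large that `(C₃ a)ⁿ ≥ n C α₁ θⁿ`. Along `Σ(t) = a u^{1/n}`, `u = t + t₀`,
the rate equals `C α₁ θⁿ Σ / (θⁿ + (C₃ a)ⁿ u)`, which is then strictly below `Σ / (n u) = Σ'`.
So `Σ` is a strict supersolution; taking `t₀` large enough that `Σ(0) ≥ S(0)`, the comparison
principle for scalar ODEs gives `S ≤ Σ`.
-/

open Real Set Filter

theorem le_of_subsolution_of_strict_supersolution {F : ℝ → ℝ → ℝ} {f f' g g' : ℝ → ℝ} {t₀ t : ℝ}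
    (hf : ∀ s, t₀ ≤ s → HasDerivAt f (f' s) s) (hg : ∀ s, t₀ ≤ s → HasDerivAt g (g' s) s)
    (hsub : ∀ s, t₀ ≤ s → f' s ≤ F s (f s)) (hsuper : ∀ s, t₀ ≤ s → F s (g s) < g' s)
    (hinit : f t₀ ≤ g t₀) (ht : t₀ ≤ t) : f t ≤ g t :=
  image_le_of_deriv_right_lt_deriv_boundary'
    (fun s hs => (hf s hs.1).continuousAt.continuousWithinAt)
    (fun s hs => (hf s hs.1).hasDerivWithinAt) hinit
    (fun s hs => (hg s hs.1).continuousAt.continuousWithinAt)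
    (fun s hs => (hg s hs.1).hasDerivWithinAt)
    (fun s hs hfg => (hsub s hs.1).trans_lt (hfg ▸ hsuper s hs.1)) ⟨ht, le_rfl⟩

theorem hasDerivAt_const_mul_rpow_add {a c p x : ℝ} (hx : 0 < x + c) :
    HasDerivAt (fun t => a * (t + c) ^ p) (a * p * (x + c) ^ (p - 1)) x := by
  have h := ((hasDerivAt_rpow_const (p := p) (Or.inl hx.ne')).comp x
    ((hasDerivAt_id x).add_const c)).const_mul a
  simpa [mul_assoc] using h

theorem exists_pos_mul_rpow_ge {c n : ℝ} (hc : 0 < c) (hn : 0 < n) (K : ℝ) :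
    ∃ a, 0 < a ∧ K ≤ (c * a) ^ n :=
  ((eventually_gt_atTop 0).and
    (((tendsto_rpow_atTop hn).comp (tendsto_id.const_mul_atTop hc)).eventually_ge_atTop K)).exists

noncomputable def hillRate (C α1 θ C3 n s : ℝ) : ℝ :=
  C * s * (α1 * θ ^ n / (θ ^ n + (C3 * s) ^ n))

theorem hillRate_mul_rpow_lt {C α1 θ C3 n a u : ℝ} (hθ : 0 < θ) (hC3 : 0 < C3) (hn : 0 < n)
    (ha : 0 < a) (hu : 0 < u) (hbig : n * C * α1 * θ ^ n ≤ (C3 * a) ^ n) :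
    hillRate C α1 θ C3 n (a * u ^ (1 / n)) < a / n * u ^ (1 / n - 1) := by
  have hderiv : a / n * u ^ (1 / n - 1) = a * u ^ (1 / n) / (n * u) := by
    rw [rpow_sub hu, rpow_one]
    field_simp
  set v := u ^ (1 / n)
  have hv : 0 < v := rpow_pos_of_pos hu _
  have hθn : 0 < θ ^ n := rpow_pos_of_pos hθ _
  have hpow : (C3 * (a * v)) ^ n = (C3 * a) ^ n * u := by
    rw [← mul_assoc, mul_rpow (by positivity) hv.le, ← rpow_mul hu.le, one_div_mul_cancel hn.ne',
      rpow_one]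
  have hD : 0 < θ ^ n + (C3 * a) ^ n * u := by positivity
  have hkey : n * C * α1 * θ ^ n * u < θ ^ n + (C3 * a) ^ n * u := by
    nlinarith [mul_le_mul_of_nonneg_right hbig hu.le]
  rw [hillRate, hpow, hderiv, mul_div_assoc', div_lt_div_iff₀ hD (by positivity)]
  calc C * (a * v) * (α1 * θ ^ n) * (n * u) = a * v * (n * C * α1 * θ ^ n * u) := by ring
    _ < a * v * (θ ^ n + (C3 * a) ^ n * u) := by gcongr

theorem subpolynomial_growth_general (C α1 θ C3 n : ℝ)
    (hθ : 0 < θ) (hC3 : 0 < C3) (hn : 0 < n)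
    (S S' : ℝ → ℝ)
    (hS : ∀ t : ℝ, 0 ≤ t → HasDerivAt S (S' t) t)
    (hineq : ∀ t : ℝ, 0 ≤ t →
      S' t ≤ C * S t * (α1 * θ ^ n / (θ ^ n + (C3 * S t) ^ n))) :
    ∃ a : ℝ, 0 < a ∧ ∃ t0 : ℝ, 0 ≤ t0 ∧
      (∀ t : ℝ, 0 ≤ t →
        C * (a * (t + t0) ^ (1/n))
            * (α1 * θ ^ n / (θ ^ n + (C3 * (a * (t + t0) ^ (1/n))) ^ n))
          ≤ a / n * (t + t0) ^ (1/n - 1)) ∧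
      S 0 ≤ a * t0 ^ (1/n) ∧
      (∀ t : ℝ, 0 ≤ t → S t ≤ a * (t + t0) ^ (1/n)) := by
  obtain ⟨a, ha, hbig⟩ := exists_pos_mul_rpow_ge hC3 hn (n * C * α1 * θ ^ n)
  obtain ⟨t0, ht0, hinit⟩ : ∃ t0, 0 < t0 ∧ S 0 ≤ a * t0 ^ (1/n) :=
    ((eventually_gt_atTop 0).and (((tendsto_rpow_atTop (one_div_pos.2 hn)).const_mul_atTop
      ha).eventually_ge_atTop (S 0))).exists
  have hsuper : ∀ t, 0 ≤ t →
      hillRate C α1 θ C3 n (a * (t + t0) ^ (1/n)) < a / n * (t + t0) ^ (1/n - 1) :=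
    fun t ht => hillRate_mul_rpow_lt hθ hC3 hn ha (by linarith) hbig
  refine ⟨a, ha, t0, ht0.le, fun t ht => (hsuper t ht).le, hinit, fun t ht => ?_⟩
  refine le_of_subsolution_of_strict_supersolution (F := fun _ s => hillRate C α1 θ C3 n s)
    (g := fun t => a * (t + t0) ^ (1/n)) hS (fun s hs => ?_) hineq hsuper (by simpa using hinit) ht
  have h := hasDerivAt_const_mul_rpow_add (a := a) (p := 1/n) (show 0 < s + t0 by linarith)
  rwa [mul_one_div] at h

/-- Subpolynomial growth: if `S' ≤ C S α₁θⁿ/(θⁿ+(C₃S)ⁿ)` then `Σ(t) = a(t+t₀)^{1/n}`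
is a supersolution for suitable `a > 0`, `t₀ ≥ 0`, and `S(t) ≤ a(t+t₀)^{1/n}`. -/
theorem subpolynomial_growth (C α1 θ C3 n : ℝ)
    (hC : 0 < C) (hα1 : 0 < α1) (hθ : 0 < θ) (hC3 : 0 < C3) (hn : 0 < n)
    (S S' : ℝ → ℝ)
    (hSpos : ∀ t : ℝ, 0 ≤ t → 0 < S t)
    (hS : ∀ t : ℝ, 0 ≤ t → HasDerivAt S (S' t) t)
    (hineq : ∀ t : ℝ, 0 ≤ t →
      S' t ≤ C * S t * (α1 * θ ^ n / (θ ^ n + (C3 * S t) ^ n))) :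
    ∃ a : ℝ, 0 < a ∧ ∃ t0 : ℝ, 0 ≤ t0 ∧
      (∀ t : ℝ, 0 ≤ t →
        C * (a * (t + t0) ^ (1/n))
            * (α1 * θ ^ n / (θ ^ n + (C3 * (a * (t + t0) ^ (1/n))) ^ n))
          ≤ a / n * (t + t0) ^ (1/n - 1)) ∧
      S 0 ≤ a * t0 ^ (1/n) ∧
      (∀ t : ℝ, 0 ≤ t → S t ≤ a * (t + t0) ^ (1/n)) :=
  subpolynomial_growth_general C α1 θ C3 n hθ hC3 hn S S' hS hineq
end
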